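/- Let t > 0, ε > 0, 0 < C₀ ≤ 1, and 1/13 < d < 1/2, and let (m_n)_{n ∈ ℕ} be a sequence of positive reals with C₀ n^d ≤ m_n ≤ C₀⁻¹ n^d for all n ≥ 1. For each n set θ_n := ⌊m_n² t⌋ and let P_n denote the uniform probability on increment sequences of length θ_n with associated lazy random walk path started at 0. Then ∑_{n=1}^∞ P_n[ R_{θ_n} ≥ m_n^{1+ε} ] < ∞, where R_{θ_n} is the range of the path of length θ_n. -/

import Mathlib

open scoped Classical

/-- The lazy random walk path of length `θ` started at `x`: increments are encoded by
`ω : Fin θ → Fin 3`, where the value `i ∈ {0,1,2}` encodes the increment `i - 1 ∈ {-1,0,1}`.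
`lazyPath θ x ω u` is the position after `u` steps (for `0 ≤ u ≤ θ`). -/
def lazyPath (θ : ℕ) (x : ℤ) (ω : Fin θ → Fin 3) (u : ℕ) : ℤ :=
  x + ∑ j : Fin θ, if (j : ℕ) < u then ((ω j : ℤ) - 1) else 0

/-- Vertex-occupation measure `Λ^a_θ = #{0 ≤ j ≤ θ : S(j) = a}`. -/
def vertexOcc (θ : ℕ) (x : ℤ) (ω : Fin θ → Fin 3) (a : ℤ) : ℕ :=
  ((Finset.range (θ + 1)).filter (fun j => lazyPath θ x ω j = a)).card

/-- Edge-occupation measure `Λ^{(a,b)}_θ = #{0 ≤ u ≤ θ-1 : S(u) = a, S(u+1) = b}`. -/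
def edgeOcc (θ : ℕ) (x : ℤ) (ω : Fin θ → Fin 3) (a b : ℤ) : ℕ :=
  ((Finset.range θ).filter
    (fun u => lazyPath θ x ω u = a ∧ lazyPath θ x ω (u + 1) = b)).card

/-- The range `R_θ = max_{0 ≤ u ≤ θ} S(u) − min_{0 ≤ u ≤ θ} S(u)` of the path. -/
def pathRange (θ : ℕ) (x : ℤ) (ω : Fin θ → Fin 3) : ℤ :=
  ((Finset.range (θ + 1)).sup' Finset.nonempty_range_add_one (fun u => lazyPath θ x ω u))
    - ((Finset.range (θ + 1)).inf' Finset.nonempty_range_add_one (fun u => lazyPath θ x ω u))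

/-!
Each position `S(u)` is a sum of independent increments uniform on `{-1, 0, 1}`, whose
exponential moment is `(1 + 2 cosh λ) / 3 ≤ exp (λ² / 2)`. The Chernoff bound with `λ = r / (2T)`
for `θ ≤ T` gives `P(|S(u)| ≥ r / 2) ≤ 2 exp (-r² / (8T))`, and since the range is at most
`2 max_u |S(u)|`, a union bound over `u ≤ θ` yields `P(R_θ ≥ r) ≤ 2 (T + 1) exp (-r² / (8T))`.
For `T = m² t` and `r = m^{1+ε}` this is `2 (m² t + 1) exp (-m^{2ε} / (8t))`, which decays faster
than any power of `m`; as `m_n ≥ C₀ n^d`, it is eventually below a multiple of `n⁻²`.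
-/

open Finset Real Filter Topology

lemma lazyPath_zero_eq_sum (θ : ℕ) (ω : Fin θ → Fin 3) (u : ℕ) :
    (lazyPath θ 0 ω u : ℝ) = ∑ j : Fin θ, if (j : ℕ) < u then ((ω j : ℕ) : ℝ) - 1 else 0 := by
  simp only [lazyPath, zero_add]
  push_cast [apply_ite (fun z : ℤ => (z : ℝ))]
  rfl

lemma sum_exp_mul_lazyStep_le (l : ℝ) :
    ∑ x : Fin 3, exp (l * (((x : ℕ) : ℝ) - 1)) ≤ 3 * exp (l ^ 2 / 2) := by
  have hcosh := cosh_le_exp_half_sq l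
  have one_le := one_le_exp (by positivity : 0 ≤ l ^ 2 / 2)
  rw [cosh_eq] at hcosh
  simp only [Fin.sum_univ_three, Fin.val_zero, Fin.val_one, Fin.val_two]
  norm_num
  linarith

lemma sum_exp_mul_lazyPath_le (θ u : ℕ) (l : ℝ) :
    ∑ ω : Fin θ → Fin 3, exp (l * lazyPath θ 0 ω u) ≤ 3 ^ θ * exp (θ * l ^ 2 / 2) := by
  set step : Fin θ → Fin 3 → ℝ := fun j x => if (j : ℕ) < u then ((x : ℕ) : ℝ) - 1 else 0
  have factor : ∀ j, ∑ x : Fin 3, exp (l * step j x) ≤ 3 * exp (l ^ 2 / 2) := by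
    intro j
    by_cases hj : (j : ℕ) < u
    · simpa only [step, hj, if_true] using sum_exp_mul_lazyStep_le l
    · simp only [step, hj, if_false, mul_zero, exp_zero, sum_const, card_univ,
        Fintype.card_fin, nsmul_eq_mul]
      linarith [one_le_exp (by positivity : 0 ≤ l ^ 2 / 2)]
  calc ∑ ω : Fin θ → Fin 3, exp (l * lazyPath θ 0 ω u)
      = ∏ j : Fin θ, ∑ x : Fin 3, exp (l * step j x) := by
        -- the increments are independent, so the exponential moment factorises
        rw [Fintype.prod_sum]
        simp only [step, lazyPath_zero_eq_sum, mul_sum, exp_sum]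
    _ ≤ ∏ _j : Fin θ, 3 * exp (l ^ 2 / 2) :=
        prod_le_prod (fun _ _ => sum_nonneg fun _ _ => (exp_pos _).le) fun j _ => factor j
    _ = 3 ^ θ * exp (θ * l ^ 2 / 2) := by
        rw [prod_const, card_univ, Fintype.card_fin, mul_pow, ← exp_nat_mul, mul_div_assoc]

lemma card_filter_mul_le_sum {ι : Type*} [Fintype ι] (P : ι → Prop) [DecidablePred P]
    (f : ι → ℝ) (hf : ∀ i, 0 ≤ f i) (c : ℝ) (hP : ∀ i, P i → c ≤ f i) :
    (#{i | P i} : ℝ) * c ≤ ∑ i, f i :=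
  calc (#{i | P i} : ℝ) * c = ∑ i ∈ univ.filter P, c := by rw [sum_const, nsmul_eq_mul]
    _ ≤ ∑ i ∈ univ.filter P, f i := sum_le_sum fun i hi => hP i (mem_filter.1 hi).2
    _ ≤ ∑ i, f i := sum_le_sum_of_subset_of_nonneg (filter_subset _ _) fun i _ _ => hf i

lemma card_le_abs_lazyPath_le (θ u : ℕ) (a : ℝ) {l : ℝ} (hl : 0 ≤ l) :
    (#{ω : Fin θ → Fin 3 | a ≤ |(lazyPath θ 0 ω u : ℝ)|} : ℝ)
      ≤ 2 * 3 ^ θ * exp (θ * l ^ 2 / 2 - l * a) := by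
  have markov := card_filter_mul_le_sum
    (fun ω : Fin θ → Fin 3 => a ≤ |(lazyPath θ 0 ω u : ℝ)|)
    (fun ω => exp (l * lazyPath θ 0 ω u) + exp (-l * lazyPath θ 0 ω u))
    (fun _ => by positivity) (exp (l * a)) fun ω hω => by
      rcases abs_cases (lazyPath θ 0 ω u : ℝ) with ⟨habs, -⟩ | ⟨habs, -⟩ <;> rw [habs] at hω
      · linarith [exp_le_exp.2 (mul_le_mul_of_nonneg_left hω hl), exp_pos (-l * lazyPath θ 0 ω u)]
      · have := exp_le_exp.2 (mul_le_mul_of_nonneg_left hω hl)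
        rw [mul_neg, ← neg_mul] at this
        linarith [exp_pos (l * lazyPath θ 0 ω u)]
  rw [sum_add_distrib] at markov
  rw [exp_sub, mul_div_assoc', le_div_iff₀ (exp_pos _)]
  have moment_neg := sum_exp_mul_lazyPath_le θ u (-l)
  rw [neg_sq] at moment_neg
  linarith [sum_exp_mul_lazyPath_le θ u l]

lemma exists_pathRange_le_two_mul_abs (θ : ℕ) (x : ℤ) (ω : Fin θ → Fin 3) :
    ∃ u ∈ range (θ + 1), pathRange θ x ω ≤ 2 * |lazyPath θ x ω u - x| := by
  obtain ⟨u, hu, hmax⟩ := exists_mem_eq_sup' nonempty_range_add_one (lazyPath θ x ω)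
  obtain ⟨v, hv, hmin⟩ := exists_mem_eq_inf' nonempty_range_add_one (lazyPath θ x ω)
  have hrange : pathRange θ x ω = (lazyPath θ x ω u - x) - (lazyPath θ x ω v - x) := by
    rw [pathRange, hmax, hmin]; ring
  have hu' := le_abs_self (lazyPath θ x ω u - x)
  have hv' := neg_abs_le (lazyPath θ x ω v - x)
  rcases le_total |lazyPath θ x ω v - x| |lazyPath θ x ω u - x| with h | h
  · exact ⟨u, hu, by linarith⟩
  · exact ⟨v, hv, by linarith⟩

lemma card_le_pathRange_div_le (θ : ℕ) {r T : ℝ} (hr : 0 ≤ r) (hT : 0 < T) (hθT : (θ : ℝ) ≤ T) :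
    (#{ω : Fin θ → Fin 3 | r ≤ (pathRange θ 0 ω : ℝ)} : ℝ) / 3 ^ θ
      ≤ 2 * (T + 1) * exp (-(r ^ 2 / (8 * T))) := by
  have union : #{ω : Fin θ → Fin 3 | r ≤ (pathRange θ 0 ω : ℝ)}
      ≤ ∑ u ∈ range (θ + 1), #{ω : Fin θ → Fin 3 | r / 2 ≤ |(lazyPath θ 0 ω u : ℝ)|} := by
    refine (card_le_card fun ω hω => ?_).trans card_biUnion_le
    obtain ⟨u, hu, hle⟩ := exists_pathRange_le_two_mul_abs θ 0 ω
    have hle' : (pathRange θ 0 ω : ℝ) ≤ 2 * |(lazyPath θ 0 ω u : ℝ)| := by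
      exact_mod_cast (sub_zero (lazyPath θ 0 ω u)) ▸ hle
    simp only [mem_biUnion, mem_filter, mem_univ, true_and] at hω ⊢
    exact ⟨u, hu, by linarith⟩
  -- `r / (2T)` is the optimal Chernoff parameter at time `T`; for `θ ≤ T` the exponent only drops
  have hl : 0 ≤ r / (2 * T) := by positivity
  have exponent : θ * (r / (2 * T)) ^ 2 / 2 - r / (2 * T) * (r / 2) ≤ -(r ^ 2 / (8 * T)) := by
    have identity : θ * (r / (2 * T)) ^ 2 / 2 - r / (2 * T) * (r / 2)
        = -(r ^ 2 / (8 * T)) - (T - θ) * (r / (2 * T)) ^ 2 / 2 := by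
      field_simp
      ring
    have : 0 ≤ (T - θ) * (r / (2 * T)) ^ 2 := mul_nonneg (sub_nonneg.2 hθT) (sq_nonneg _)
    linarith
  rw [div_le_iff₀ (by positivity)]
  calc (#{ω : Fin θ → Fin 3 | r ≤ (pathRange θ 0 ω : ℝ)} : ℝ)
      ≤ ∑ u ∈ range (θ + 1), (#{ω : Fin θ → Fin 3 | r / 2 ≤ |(lazyPath θ 0 ω u : ℝ)|} : ℝ) := by
        exact_mod_cast union
    _ ≤ ∑ _u ∈ range (θ + 1), 2 * 3 ^ θ * exp (-(r ^ 2 / (8 * T))) :=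
        sum_le_sum fun u _ => (card_le_abs_lazyPath_le θ u (r / 2) hl).trans (by gcongr)
    _ = (θ + 1) * (2 * 3 ^ θ * exp (-(r ^ 2 / (8 * T)))) := by
        rw [sum_const, card_range, nsmul_eq_mul]; push_cast; ring
    _ = 2 * (θ + 1) * exp (-(r ^ 2 / (8 * T))) * 3 ^ θ := by ring
    _ ≤ 2 * (T + 1) * exp (-(r ^ 2 / (8 * T))) * 3 ^ θ := by gcongr

lemma tendsto_rpow_mul_exp_neg_rpow (s : ℝ) {b δ : ℝ} (hb : 0 < b) (hδ : 0 < δ) :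
    Tendsto (fun x : ℝ => x ^ s * exp (-b * x ^ δ)) atTop (𝓝 0) := by
  refine ((tendsto_rpow_mul_exp_neg_mul_atTop_nhds_zero (s / δ) b hb).comp
    (tendsto_rpow_atTop hδ)).congr' ?_
  filter_upwards [eventually_ge_atTop 0] with x hx
  simp only [Function.comp_apply, ← rpow_mul hx, mul_div_cancel₀ s hδ.ne']

lemma summable_comp_of_tendsto_rpow_mul {h : ℝ → ℝ} {a : ℕ → ℝ} {c d : ℝ} (hc : 0 < c)
    (hd : 0 < d) (hh : Tendsto (fun x => x ^ (2 / d) * h x) atTop (𝓝 0))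
    (ha : ∀ n : ℕ, 1 ≤ n → c * (n : ℝ) ^ d ≤ a n) :
    Summable fun n => h (a n) := by
  have ha_top : Tendsto a atTop atTop := by
    refine tendsto_atTop_mono' atTop ((eventually_ge_atTop 1).mono ha) ?_
    exact (tendsto_rpow_atTop hd).comp tendsto_natCast_atTop_atTop |>.const_mul_atTop hc
  have small : ∀ᶠ n in atTop, |a n ^ (2 / d) * h (a n)| ≤ 1 :=
    ha_top.eventually ((hh.abs.eventually (ge_mem_nhds (by norm_num : |(0 : ℝ)| < 1))))
  refine Summable.of_norm_bounded_eventually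
    ((Real.summable_nat_rpow.2 (by norm_num : (-2 : ℝ) < -1)).mul_left (c ^ (-(2 / d)))) ?_
  rw [Nat.cofinite_eq_atTop]
  filter_upwards [small, eventually_ge_atTop 1] with n hsmall hn
  have hcn : 0 < c * (n : ℝ) ^ d := by
    have : (1 : ℝ) ≤ n := by exact_mod_cast hn
    positivity
  have han : 0 < a n := hcn.trans_le (ha n hn)
  calc ‖h (a n)‖ = a n ^ (-(2 / d)) * |a n ^ (2 / d) * h (a n)| := by
        rw [abs_mul, abs_of_pos (rpow_pos_of_pos han _), ← mul_assoc, ← rpow_add han,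
          neg_add_cancel, rpow_zero, one_mul, Real.norm_eq_abs]
    _ ≤ (c * (n : ℝ) ^ d) ^ (-(2 / d)) * 1 :=
        mul_le_mul (rpow_le_rpow_of_nonpos hcn (ha n hn) (neg_nonpos.2 (by positivity))) hsmall
          (abs_nonneg _) (by positivity)
    _ = c ^ (-(2 / d)) * (n : ℝ) ^ (-2 : ℝ) := by
        rw [mul_one, mul_rpow hc.le (by positivity), ← rpow_mul (by positivity),
          mul_neg, mul_div_cancel₀ 2 hd.ne']

theorem range_deviation_summable_general (t : ℝ) (ht : 0 < t) (ε : ℝ) (hε : 0 < ε)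
    (C₀ : ℝ) (hC₀ : 0 < C₀)
    (d : ℝ) (hd₁ : 1 / 13 < d)
    (m : ℕ → ℝ)
    (hlow : ∀ n : ℕ, 1 ≤ n → C₀ * (n : ℝ) ^ d ≤ m n) :
    Summable (fun n : ℕ =>
      ((Finset.univ.filter (fun ω : Fin ⌊(m (n + 1)) ^ 2 * t⌋₊ → Fin 3 =>
          (m (n + 1)) ^ ((1 : ℝ) + ε) ≤
            (pathRange ⌊(m (n + 1)) ^ 2 * t⌋₊ 0 ω : ℝ))).card : ℝ)
        / 3 ^ ⌊(m (n + 1)) ^ 2 * t⌋₊) := by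
  have hd : 0 < d := by linarith
  have hb : 0 < (8 * t)⁻¹ := by positivity
  have hδ : 0 < 2 * ε := by positivity
  set h : ℝ → ℝ := fun M => 2 * (M ^ 2 * t + 1) * exp (-(8 * t)⁻¹ * M ^ (2 * ε)) with h_def
  have decay : Tendsto (fun M => M ^ (2 / d) * h M) atTop (𝓝 0) := by
    have := ((tendsto_rpow_mul_exp_neg_rpow (2 / d + 2) hb hδ).const_mul (2 * t)).add
      ((tendsto_rpow_mul_exp_neg_rpow (2 / d) hb hδ).const_mul 2)
    rw [mul_zero, mul_zero, add_zero] at this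
    refine this.congr' ?_
    filter_upwards [eventually_gt_atTop 0] with M hM
    rw [h_def, rpow_add hM, rpow_two]
    ring
  have summable_h : Summable fun n => h (m (n + 1)) :=
    (summable_nat_add_iff 1).2 (summable_comp_of_tendsto_rpow_mul hC₀ hd decay hlow)
  refine summable_h.of_nonneg_of_le (fun n => by positivity) fun n => ?_
  have hM : 0 < m (n + 1) :=
    (by positivity : 0 < C₀ * ((n + 1 : ℕ) : ℝ) ^ d).trans_le (hlow _ n.succ_pos)
  have hT : 0 < m (n + 1) ^ 2 * t := by positivity
  have exponent : (m (n + 1) ^ (1 + ε)) ^ 2 / (8 * (m (n + 1) ^ 2 * t))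
      = (8 * t)⁻¹ * m (n + 1) ^ (2 * ε) := by
    rw [← rpow_mul_natCast hM.le, show (1 + ε) * (2 : ℕ) = 2 + 2 * ε by push_cast; ring,
      rpow_add hM, rpow_two]
    field_simp
  calc _ ≤ _ := card_le_pathRange_div_le _ (by positivity) hT (Nat.floor_le hT.le)
    _ = h (m (n + 1)) := by rw [exponent, ← neg_mul]

/-- Let `m_n ≍ n^d` with `1/13 < d < 1/2` and `θ_n = ⌊m_n² t⌋`.  Then the
probabilities that the range of the lazy random walk of length `θ_n` started at `0`
exceeds `m_n^{1+ε}` are summable over `n ≥ 1`. -/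
theorem range_deviation_summable (t : ℝ) (ht : 0 < t) (ε : ℝ) (hε : 0 < ε)
    (C₀ : ℝ) (hC₀ : 0 < C₀) (hC₀' : C₀ ≤ 1)
    (d : ℝ) (hd₁ : 1 / 13 < d) (hd₂ : d < 1 / 2)
    (m : ℕ → ℝ) (hm : ∀ n, 0 < m n)
    (hlow : ∀ n : ℕ, 1 ≤ n → C₀ * (n : ℝ) ^ d ≤ m n)
    (hhigh : ∀ n : ℕ, 1 ≤ n → m n ≤ C₀⁻¹ * (n : ℝ) ^ d) :
    Summable (fun n : ℕ =>
      ((Finset.univ.filter (fun ω : Fin ⌊(m (n + 1)) ^ 2 * t⌋₊ → Fin 3 =>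
          (m (n + 1)) ^ ((1 : ℝ) + ε) ≤
            (pathRange ⌊(m (n + 1)) ^ 2 * t⌋₊ 0 ω : ℝ))).card : ℝ)
        / 3 ^ ⌊(m (n + 1)) ^ 2 * t⌋₊) :=
  range_deviation_summable_general t ht ε hε C₀ hC₀ d hd₁ m hlow
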